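/- arXiv:2001.11270 — 2 statements merged into one kernel-verified Lean document; each statement's English description precedes it below -/
import Mathlib

section
/- Let B(P,L) be the 6×6 real matrix B = -[[0, P̂],[P̂, L̂]] (in 3×3 blocks), where for v ∈ ℝ³ the matrix v̂ is defined by v̂u = v × u. Define G(P,L) = |L|² - a²(P₁² + P₂²) and L_z(P,L) = L₃ on ℝ³ × ℝ³. Then for every (P,L) ∈ ℝ³ × ℝ³ and every a ∈ ℝ, the Poisson bracket {L_z, G}(P,L) := (∇L_z)ᵀ B(P,L) (∇G) vanishes, where ∇ denotes the gradient with respect to the six variables (P₁,P₂,P₃,L₁,L₂,L₃). In particular L_z and G Poisson commute with respect to the Lie–Poisson structure of e*(3), so they define a Liouville integrable system (the spheroidal harmonics integrable system). -/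
open Matrix

noncomputable section

/-- For `v ∈ ℝ³`, the antisymmetric hat matrix with `v̂ u = v × u`. -/
def hat (v : Fin 3 → ℝ) : Matrix (Fin 3) (Fin 3) ℝ :=
  !![0, -v 2, v 1; v 2, 0, -v 0; -v 1, v 0, 0]

/-- The Lie–Poisson structure matrix of `e*(3)`:  `B = -[[0, P̂],[P̂, L̂]]`. -/
def Bmat (P L : Fin 3 → ℝ) : Matrix (Fin 3 ⊕ Fin 3) (Fin 3 ⊕ Fin 3) ℝ :=
  - Matrix.fromBlocks 0 (hat P) (hat P) (hat L)

/-- `ℝ⁶` as a Euclidean (inner product) space, with the first three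
coordinates `P` and the last three coordinates `L`. -/
abbrev R6 := EuclideanSpace ℝ (Fin 3 ⊕ Fin 3)

def Pof (w : R6) : Fin 3 → ℝ := fun i => w (Sum.inl i)

def Lof (w : R6) : Fin 3 → ℝ := fun i => w (Sum.inr i)

/-- `G(P,L) = |L|² - a²(P₁² + P₂²)`. -/
def Gfun (a : ℝ) : R6 → ℝ := fun w =>
  (Lof w 0) ^ 2 + (Lof w 1) ^ 2 + (Lof w 2) ^ 2 - a ^ 2 * ((Pof w 0) ^ 2 + (Pof w 1) ^ 2)

/-- `L_z(P,L) = L₃`. -/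
def Lzfun : R6 → ℝ := fun w => Lof w 2

/-! Since `∇L_z` is the basis vector of `L₃`, the bracket `{L_z, g}` is minus the third component
of `P × ∇_P g + L × ∇_L g`, i.e. the derivative of `g` along rotations about the `z`-axis.
For `G` both terms vanish: `∇_L G = 2L` and `∇_P G = -2a²(P₁, P₂, 0)`. -/

theorem hat_mulVec (v u : Fin 3 → ℝ) : hat v *ᵥ u = v ⨯₃ u := by
  ext i; fin_cases i <;> simp [hat, cross_apply, mulVec, vecHead, vecTail] <;> ring

theorem Bmat_mulVec (P L : Fin 3 → ℝ) (x : Fin 3 ⊕ Fin 3 → ℝ) :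
    Bmat P L *ᵥ x =
      -Sum.elim (P ⨯₃ (x ∘ Sum.inr)) (P ⨯₃ (x ∘ Sum.inl) + L ⨯₃ (x ∘ Sum.inr)) := by
  simp only [Bmat, neg_mulVec, fromBlocks_mulVec, zero_mulVec, zero_add, hat_mulVec]

namespace EuclideanSpace

variable {ι : Type*} [Fintype ι]

theorem gradient_coord [DecidableEq ι] (i : ι) (w : EuclideanSpace ℝ ι) :
    gradient (fun v : EuclideanSpace ℝ ι => v i) w = single i 1 :=
  HasGradientAt.gradient <| hasGradientAt_iff_hasFDerivAt.2 <|
    (proj i : EuclideanSpace ℝ ι →L[ℝ] ℝ).hasFDerivAt.congr_fderiv <| by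
      ext v; simp [inner_single_left]

theorem hasGradientAt_sum_mul_sq (c : ι → ℝ) (w : EuclideanSpace ℝ ι) :
    HasGradientAt (fun v : EuclideanSpace ℝ ι => ∑ i, c i * v i ^ 2)
      (WithLp.toLp 2 fun i => 2 * c i * w i) w := by
  rw [hasGradientAt_iff_hasFDerivAt]
  refine (HasFDerivAt.fun_sum fun i _ =>
    ((proj i : EuclideanSpace ℝ ι →L[ℝ] ℝ).hasFDerivAt (x := w)).pow 2
      |>.const_mul (c i)).congr_fderiv ?_
  ext v
  simp only [_root_.sum_apply, _root_.smul_apply, PiLp.proj_apply, smul_eq_mul,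
    InnerProductSpace.toDual_apply_apply, PiLp.inner_apply, RCLike.inner_apply, conj_trivial]
  exact Finset.sum_congr rfl fun i _ => by ring

end EuclideanSpace

theorem Gfun_eq_sum_mul_sq (a : ℝ) :
    Gfun a = fun w : R6 => ∑ i, Sum.elim ![-a ^ 2, -a ^ 2, 0] 1 i * w i ^ 2 := by
  ext w
  simp only [Gfun, Pof, Lof, Fintype.sum_sum_type, Fin.sum_univ_three, Sum.elim_inl, Sum.elim_inr,
    cons_val, cons_val_zero, cons_val_one, Pi.one_apply]
  ring

/-- The Poisson bracket `{L_z, G} = (∇L_z)ᵀ B (∇G)` vanishes identically, so the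
spheroidal harmonics integrable system `(L_z, G)` Poisson commutes on `e*(3)`. -/
theorem lz_G_poisson_commute (a : ℝ) (w : R6) :
    dotProduct (fun i => gradient Lzfun w i)
      ((Bmat (Pof w) (Lof w)).mulVec (fun i => gradient (Gfun a) w i)) = 0 := by
  have hLz : gradient Lzfun w = EuclideanSpace.single (Sum.inr 2) 1 :=
    EuclideanSpace.gradient_coord _ w
  simp only [hLz, PiLp.ofLp_single]
  rw [single_one_dotProduct, Gfun_eq_sum_mul_sq,
    (EuclideanSpace.hasGradientAt_sum_mul_sq _ w).gradient, Bmat_mulVec]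
  simp only [Pi.neg_apply, Sum.elim_inr, Pi.add_apply, cross_apply, Function.comp_apply,
    Sum.elim_inl, Pi.one_apply, cons_val, cons_val_zero, cons_val_one, Pof, Lof]
  ring
end
end

section
/- Let γ > 0 and take m = 0, so C₃(b) = (1-b₁²)b₂ - b₃² and G_red(b) = b₂ - γ²(1-b₁²). Then the set {b ∈ ℝ³ : C₃(b) = 0, G_red(b) = 0, b₂ ≥ 0, b₁² ≤ 1} equals exactly the union of the two parabolic arcs { (b₁, γ²(1-b₁²), γ(1-b₁²)) : b₁ ∈ [-1,1] } ∪ { (b₁, γ²(1-b₁²), -γ(1-b₁²)) : b₁ ∈ [-1,1] }. These arcs are the separatrices connecting the two singular points (±1,0,0) of the singular reduced phase space P₀, and their preimage in full phase space is the doubly pinched torus over the focus-focus value (0,0). -/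
/-!
On the energy level `G_red = 0` the coordinate `b₂` is forced to equal `γ²(1 - b₁²)`, and then
the Casimir equation `C₃ = 0` becomes `b₃² = (γ(1 - b₁²))²`, which leaves exactly the two signs of
`b₃`. Conversely, on both arcs `b₂ = γ²(1 - b₁²) ≥ 0` because `b₁² ≤ 1`.
-/

theorem eq_vec3_iff {α : Type*} (b : Fin 3 → α) (x y z : α) :
    b = ![x, y, z] ↔ b 0 = x ∧ b 1 = y ∧ b 2 = z := by
  constructor
  · rintro rfl
    exact ⟨rfl, rfl, rfl⟩
  · rintro ⟨h₀, h₁, h₂⟩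
    funext i
    fin_cases i <;> assumption

theorem sq_le_one_iff_mem_Icc {α : Type*} [Ring α] [LinearOrder α] [IsStrictOrderedRing α] {t : α} :
    t ^ 2 ≤ 1 ↔ t ∈ Set.Icc (-1) 1 := by
  rw [sq_le_one_iff_abs_le_one, abs_le, Set.mem_Icc]

theorem eq_or_eq_neg_of_casimir_eq_zero {R : Type*} [CommRing R] [NoZeroDivisors R]
    {x y z c : R} (hC : (1 - x ^ 2) * y - z ^ 2 = 0) (hG : y - c ^ 2 * (1 - x ^ 2) = 0) :
    z = c * (1 - x ^ 2) ∨ z = -(c * (1 - x ^ 2)) :=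
  sq_eq_sq_iff_eq_or_eq_neg.mp (by linear_combination (1 - x ^ 2) * hG - hC)

theorem separatrix_arcs_general (γ : ℝ) :
    {b : Fin 3 → ℝ |
        (1 - (b 0) ^ 2) * b 1 - (b 2) ^ 2 = 0 ∧
        b 1 - γ ^ 2 * (1 - (b 0) ^ 2) = 0 ∧
        0 ≤ b 1 ∧ (b 0) ^ 2 ≤ 1} =
      {b : Fin 3 → ℝ | ∃ t ∈ Set.Icc (-1 : ℝ) 1,
        b = ![t, γ ^ 2 * (1 - t ^ 2), γ * (1 - t ^ 2)] ∨
        b = ![t, γ ^ 2 * (1 - t ^ 2), -(γ * (1 - t ^ 2))]} := by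
  ext b
  simp only [Set.mem_ofPred_eq, eq_vec3_iff]
  constructor
  · rintro ⟨hC, hG, -, hb₀⟩
    have hb₁ : b 1 = γ ^ 2 * (1 - b 0 ^ 2) := sub_eq_zero.mp hG
    exact ⟨b 0, sq_le_one_iff_mem_Icc.mp hb₀,
      (eq_or_eq_neg_of_casimir_eq_zero hC hG).imp (⟨rfl, hb₁, ·⟩) (⟨rfl, hb₁, ·⟩)⟩
  · rintro ⟨t, ht, ⟨rfl, hb₁, hb₂⟩ | ⟨rfl, hb₁, hb₂⟩⟩ <;>
    · have ht' : b 0 ^ 2 ≤ 1 := sq_le_one_iff_mem_Icc.mpr ht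
      rw [hb₁, hb₂]
      exact ⟨by ring, sub_self _, mul_nonneg (sq_nonneg γ) (sub_nonneg.mpr ht'), ht'⟩

/-- For `m = 0` and `γ > 0`: the intersection of the singular reduced phase space
`P₀ = {C₃ = 0, b₂ ≥ 0, b₁² ≤ 1}` (with `C₃(b) = (1-b₁²)b₂ - b₃²`) with the reduced
energy surface `{G_red = 0}` (with `G_red(b) = b₂ - γ²(1-b₁²)`) is exactly the union
of the two parabolic arcs `b = (b₁, γ²(1-b₁²), ±γ(1-b₁²))`, `b₁ ∈ [-1,1]` — the
separatrices connecting the singular points `(±1,0,0)`. -/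
theorem separatrix_arcs (γ : ℝ) (hγ : 0 < γ) :
    {b : Fin 3 → ℝ |
        (1 - (b 0) ^ 2) * b 1 - (b 2) ^ 2 = 0 ∧
        b 1 - γ ^ 2 * (1 - (b 0) ^ 2) = 0 ∧
        0 ≤ b 1 ∧ (b 0) ^ 2 ≤ 1} =
      {b : Fin 3 → ℝ | ∃ t ∈ Set.Icc (-1 : ℝ) 1,
        b = ![t, γ ^ 2 * (1 - t ^ 2), γ * (1 - t ^ 2)] ∨
        b = ![t, γ ^ 2 * (1 - t ^ 2), -(γ * (1 - t ^ 2))]} :=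
  separatrix_arcs_general γ
end
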